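/- arXiv:0804.2115 — 2 statements merged into one kernel-verified Lean document; each statement's English description precedes it below -/
import Mathlib

section
/- The set S = {xᵢxⱼ - xⱼxᵢ : xᵢ > xⱼ, xᵢ, xⱼ ∈ X} is a Gröbner–Shirshov basis in k⟨X⟩ ⊗ k⟨Y⟩ with respect to the deg-lex order on X*Y*, and consequently k[X] ⊗ k⟨Y⟩ ≅ k⟨X ∪ Y | T ∪ S⟩ where T = {yx - xy : x ∈ X, y ∈ Y}. -/
/-!
Every composition of two commutators `f = xᵢxⱼ - xⱼxᵢ`, `g = xₖxₗ - xₗxₖ` has the shape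
`α f β - γ g δ` with `α f̄ β = γ ḡ δ = w`. The leading words cancel, so what is left is the
difference of two words below `w` with the `X`-letters of `w` rearranged and the same `Y`-part.
Such a difference is trivial modulo `(S, w)`: insertion sort turns a word into its sorted
rearrangement through adjacent transpositions `… xᵢxⱼ … ↦ … xⱼxᵢ …` with `xᵢ > xⱼ`, each of which
is a term `a s b` with `s ∈ S` and leading word at most the word being sorted, hence below `w`.

The isomorphism `k[X] ⊗ k⟨Y⟩ ≅ k⟨X ∪ Y | T ∪ S⟩` is explicit: the relations `T ∪ S` hold in
the tensor product, and conversely the images of the `xᵢ` commute with each other and with the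
`yⱼ`, so `k[X]` and `k⟨Y⟩` map into the quotient with commuting images.
-/

/-- A monomial order: a well-founded strict total order compatible with multiplication. -/
def MonOrd {M : Type*} [Monoid M] (lt : M → M → Prop) : Prop :=
  IsStrictTotalOrder M lt ∧ WellFounded lt ∧
    ∀ u v w₁ w₂ : M, lt u v → lt (w₁ * u * w₂) (w₁ * v * w₂)

/-- `m` is the leading word of `f` with respect to the order `lt`. -/
def IsLeadR {k M : Type*} [Semiring k] (lt : M → M → Prop)
    (f : MonoidAlgebra k M) (m : M) : Prop :=
  m ∈ f.coeff.support ∧ ∀ u ∈ f.coeff.support, u ≠ m → lt u m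

/-- `f` is monic: its leading coefficient is `1`. -/
def MonicR {k M : Type*} [Semiring k] (lt : M → M → Prop) (f : MonoidAlgebra k M) : Prop :=
  ∃ m, IsLeadR lt f m ∧ f.coeff m = 1

/-- The monomial `m` viewed as an element of the monoid algebra. -/
noncomputable def mono (k : Type*) {M : Type*} [Semiring k] [Monoid M] (m : M) :
    MonoidAlgebra k M := MonoidAlgebra.of k M m

/-- `h` is trivial modulo `(S, w)`: it is a linear combination `Σ αᵢ aᵢ sᵢ bᵢ`
with `sᵢ ∈ S` and leading words `aᵢ s̄ᵢ bᵢ < w`. -/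
def TrivModR {k M : Type*} [Semiring k] [Monoid M] (lt : M → M → Prop)
    (S : Set (MonoidAlgebra k M)) (w : M) (h : MonoidAlgebra k M) : Prop :=
  ∃ (n : ℕ) (α : Fin n → k) (a b : Fin n → M) (s : Fin n → MonoidAlgebra k M),
    (∀ i, s i ∈ S) ∧
    h = ∑ i, α i • (mono k (a i) * s i * mono k (b i)) ∧
    ∀ i, ∃ m, IsLeadR lt (s i) m ∧ lt (a i * m * b i) w

/-- Gröbner–Shirshov basis in a free associative algebra `k⟨Z⟩`:
all intersection and inclusion compositions are trivial. -/
def FIsGSB {k Z : Type*} [Ring k] (lt : FreeMonoid Z → FreeMonoid Z → Prop)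
    (S : Set (MonoidAlgebra k (FreeMonoid Z))) : Prop :=
  (∀ s ∈ S, MonicR lt s) ∧
  ∀ f ∈ S, ∀ g ∈ S, ∀ mf mg : FreeMonoid Z, IsLeadR lt f mf → IsLeadR lt g mg →
    ((∀ a b : FreeMonoid Z, mf * b = a * mg →
        (mf * b).length < mf.length + mg.length →
        TrivModR lt S (mf * b) (f * mono k b - mono k a * g)) ∧
     (∀ a b : FreeMonoid Z, mf = a * mg * b →
        TrivModR lt S mf (f - mono k a * g * mono k b)))

/-- the deg-lex order on words induced by an order on letters -/
def degLex {A : Type*} (ltA : A → A → Prop) (u v : FreeMonoid A) : Prop :=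
  u.length < v.length ∨ (u.length = v.length ∧ List.Lex ltA u.toList v.toList)

/-- Normal words of `k⟨X⟩ ⊗ k⟨Y⟩`: the monoid `X* × Y*`
(whose multiplication is `(u^X u^Y)(v^X v^Y) = u^X v^X u^Y v^Y`). -/
abbrev NW (X Y : Type*) := FreeMonoid X × FreeMonoid Y

/-- the (deg-)lex order on `N = X*Y*` built from orders on `X*` and `Y*`:
`u > v` iff `u^X > v^X` or (`u^X = v^X` and `u^Y > v^Y`). -/
def lexNW {X Y : Type*} (ltX : FreeMonoid X → FreeMonoid X → Prop)
    (ltY : FreeMonoid Y → FreeMonoid Y → Prop) (u v : NW X Y) : Prop :=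
  ltX u.1 v.1 ∨ (u.1 = v.1 ∧ ltY u.2 v.2)

/-- All compositions `(f,g)_w = p` in `k⟨X⟩ ⊗ k⟨Y⟩`, where `mf, mg` are the leading
words of `f, g`.  The cases are: 1.1 `X`-inclusion only, 1.2 `Y`-inclusion only,
1.3 `X,Y`-inclusion, 1.4 `X,Y`-skew-inclusion, 2.1 `X`-intersection only,
2.2 `Y`-intersection only, 2.3 `X,Y`-intersection, 2.4 `X,Y`-skew-intersection,
3.1 `X`-inclusion and `Y`-intersection, 3.2 `X`-intersection and `Y`-inclusion. -/
def IsComp {k X Y : Type*} [Ring k] (f g : MonoidAlgebra k (NW X Y))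
    (mf mg : NW X Y) (p : MonoidAlgebra k (NW X Y)) (w : NW X Y) : Prop :=
  let e : NW X Y → MonoidAlgebra k (NW X Y) := fun m => mono k m
  let fx := mf.1; let fy := mf.2; let gx := mg.1; let gy := mg.2
  -- 1.1 X-inclusion only
  (∃ (a b : FreeMonoid X) (c : FreeMonoid Y), fx = a * gx * b ∧
     ((w = (fx, fy * c * gy) ∧ p = f * e (1, c * gy) - e (a, fy * c) * g * e (b, 1)) ∨
      (w = (fx, gy * c * fy) ∧ p = e (1, gy * c) * f - e (a, 1) * g * e (b, c * fy)))) ∨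
  -- 1.2 Y-inclusion only
  (∃ (a : FreeMonoid X) (c d : FreeMonoid Y), fy = c * gy * d ∧
     ((w = (fx * a * gx, fy) ∧ p = f * e (a * gx, 1) - e (fx * a, c) * g * e (1, d)) ∨
      (w = (gx * a * fx, fy) ∧ p = e (gx * a, 1) * f - e (1, c) * g * e (a * fx, d)))) ∨
  -- 1.3 X,Y-inclusion
  (∃ (a b : FreeMonoid X) (c d : FreeMonoid Y), fx = a * gx * b ∧ fy = c * gy * d ∧
     w = (fx, fy) ∧ p = f - e (a, c) * g * e (b, d)) ∨
  -- 1.4 X,Y-skew-inclusion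
  (∃ (a b : FreeMonoid X) (c d : FreeMonoid Y), fx = a * gx * b ∧ gy = c * fy * d ∧
     w = (fx, gy) ∧ p = e (1, c) * f * e (1, d) - e (a, 1) * g * e (b, 1)) ∨
  -- 2.1 X-intersection only
  (∃ (a b : FreeMonoid X) (c : FreeMonoid Y), fx * a = b * gx ∧
     (fx * a).length < fx.length + gx.length ∧
     ((w = (fx * a, fy * c * gy) ∧ p = f * e (a, c * gy) - e (b, fy * c) * g) ∨
      (w = (fx * a, gy * c * fy) ∧
        p = e (1, gy * c) * f * e (a, 1) - e (b, 1) * g * e (1, c * fy)))) ∨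
  -- 2.2 Y-intersection only
  (∃ (a : FreeMonoid X) (c d : FreeMonoid Y), fy * c = d * gy ∧
     (fy * c).length < fy.length + gy.length ∧
     ((w = (fx * a * gx, fy * c) ∧ p = f * e (a * gx, c) - e (fx * a, d) * g) ∨
      (w = (gx * a * fx, fy * c) ∧
        p = e (gx * a, 1) * f * e (1, c) - e (1, d) * g * e (a * fx, 1)))) ∨
  -- 2.3 X,Y-intersection
  (∃ (a b : FreeMonoid X) (c d : FreeMonoid Y), fx * a = b * gx ∧ fy * c = d * gy ∧
     (fx * a).length < fx.length + gx.length ∧ (fy * c).length < fy.length + gy.length ∧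
     w = (fx * a, fy * c) ∧ p = f * e (a, c) - e (b, d) * g) ∨
  -- 2.4 X,Y-skew-intersection
  (∃ (a b : FreeMonoid X) (c d : FreeMonoid Y), fx * a = b * gx ∧ c * fy = gy * d ∧
     (fx * a).length < fx.length + gx.length ∧ (c * fy).length < fy.length + gy.length ∧
     w = (fx * a, c * fy) ∧ p = e (1, c) * f * e (a, 1) - e (b, 1) * g * e (1, d)) ∨
  -- 3.1 X-inclusion and Y-intersection
  (∃ (a b : FreeMonoid X) (c d : FreeMonoid Y), fx = a * gx * b ∧
     ((fy * c = d * gy ∧ (fy * c).length < fy.length + gy.length ∧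
        w = (fx, fy * c) ∧ p = f * e (1, c) - e (a, d) * g * e (b, 1)) ∨
      (c * fy = gy * d ∧ (c * fy).length < fy.length + gy.length ∧
        w = (fx, c * fy) ∧ p = e (1, c) * f - e (a, 1) * g * e (b, d)))) ∨
  -- 3.2 X-intersection and Y-inclusion
  (∃ (a b : FreeMonoid X) (c d : FreeMonoid Y), fx * a = b * gx ∧
     (fx * a).length < fx.length + gx.length ∧
     ((fy = c * gy * d ∧ w = (fx * a, fy) ∧ p = f * e (a, 1) - e (b, c) * g * e (1, d)) ∨
      (gy = c * fy * d ∧ w = (fx * a, gy) ∧ p = e (1, c) * f * e (a, d) - e (b, 1) * g)))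

/-- Gröbner–Shirshov basis in `k⟨X⟩ ⊗ k⟨Y⟩`: a set of monic polynomials
all of whose compositions are trivial. -/
def IsGSB {k X Y : Type*} [Ring k] (lt : NW X Y → NW X Y → Prop)
    (S : Set (MonoidAlgebra k (NW X Y))) : Prop :=
  (∀ s ∈ S, MonicR lt s) ∧
  ∀ f ∈ S, ∀ g ∈ S, ∀ (mf mg : NW X Y) (p : MonoidAlgebra k (NW X Y)) (w : NW X Y),
    IsLeadR lt f mf → IsLeadR lt g mg → IsComp f g mf mg p w → TrivModR lt S w p

/-- the abelianization map `γ : X* → [X]`, with `[X]` the free commutative monoid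
on `X` realized as `Multiplicative (Multiset X)`. -/
def gam {X : Type*} (u : FreeMonoid X) : Multiplicative (Multiset X) :=
  Multiplicative.ofAdd (↑u.toList : Multiset X)

/-- the order on `X*` lifted from a monomial order on `[X]`:
`u > v` iff `γ(u) > γ(v)`, or `γ(u) = γ(v)` and `u >_lex v`. -/
def liftOrd {X : Type*} [LinearOrder X]
    (ltC : Multiplicative (Multiset X) → Multiplicative (Multiset X) → Prop)
    (u v : FreeMonoid X) : Prop :=
  ltC (gam u) (gam v) ∨ (gam u = gam v ∧ List.Lex (· < ·) u.toList v.toList)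

/-- `δ` on monomials: the weakly increasing word representing a commutative monomial. -/
noncomputable def dword {X : Type*} [LinearOrder X] (m : Multiplicative (Multiset X)) :
    FreeMonoid X :=
  FreeMonoid.ofList (Multiset.sort (Multiplicative.toAdd m) (· ≤ ·))

/-- the lexicographic splitting `δ : k[X] → k⟨X⟩`. -/
noncomputable def deltaMap {k X : Type*} [Semiring k] [LinearOrder X]
    (f : MonoidAlgebra k (Multiplicative (Multiset X))) :
    MonoidAlgebra k (FreeMonoid X) :=
  MonoidAlgebra.mapDomain dword f

/-- the set `S₁ = {xᵢxⱼ - xⱼxᵢ : xᵢ > xⱼ}` of commutators in `k⟨X⟩`. -/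
noncomputable def commSet (k X : Type*) [Ring k] [LinearOrder X] :
    Set (MonoidAlgebra k (FreeMonoid X)) :=
  {p | ∃ i j : X, j < i ∧
    p = mono k (FreeMonoid.of i * FreeMonoid.of j) - mono k (FreeMonoid.of j * FreeMonoid.of i)}

/-- `U(m)`: commutative monomials in the variables strictly between the least and the
greatest variable occurring in `m`. -/
def UU {X : Type*} [LinearOrder X] (m : Multiplicative (Multiset X)) :
    Set (Multiplicative (Multiset X)) :=
  {u | ∀ y ∈ Multiplicative.toAdd u,
     (∃ z ∈ Multiplicative.toAdd m, z < y) ∧ (∃ z ∈ Multiplicative.toAdd m, y < z)}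

/-- Normal words of `k[X] ⊗ k⟨Y⟩`: the monoid `[X]Y*`. -/
abbrev CW (X Y : Type*) := Multiplicative (Multiset X) × FreeMonoid Y

/-- the order on `[X]Y*`: compare the `Y`-part first, then the `[X]`-part. -/
def cwOrd {X Y : Type*}
    (ltC : Multiplicative (Multiset X) → Multiplicative (Multiset X) → Prop)
    (ltY : FreeMonoid Y → FreeMonoid Y → Prop) (u v : CW X Y) : Prop :=
  ltY u.2 v.2 ∨ (u.2 = v.2 ∧ ltC u.1 v.1)

/-- the order on `X*Y*` lifted from the order on `[X]Y*`, breaking ties by `lex`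
on the `X`-component. -/
def liftNW {X Y : Type*} [LinearOrder X]
    (ltC : Multiplicative (Multiset X) → Multiplicative (Multiset X) → Prop)
    (ltY : FreeMonoid Y → FreeMonoid Y → Prop) (u v : NW X Y) : Prop :=
  cwOrd ltC ltY (gam u.1, u.2) (gam v.1, v.2) ∨
    ((gam u.1 = gam v.1 ∧ u.2 = v.2) ∧ List.Lex (· < ·) u.1.toList v.1.toList)

/-- `δ : k[X] ⊗ k⟨Y⟩ → k⟨X⟩ ⊗ k⟨Y⟩`, the lexicographic splitting extended by the
identity on `Y`-words. -/
noncomputable def deltaNW {k X Y : Type*} [Semiring k] [LinearOrder X]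
    (f : MonoidAlgebra k (CW X Y)) : MonoidAlgebra k (NW X Y) :=
  MonoidAlgebra.mapDomain (fun m : CW X Y => ((dword m.1, m.2) : NW X Y)) f

/-- Mikhalev–Zolotykh compositions in `k[X] ⊗ k⟨Y⟩`: inclusion `C₁`, overlap `C₂`
and external `C₃` compositions, where `mf`, `mg` are the leading words of `f`, `g`,
and `L = lcm(mf^X, mg^X)`. -/
def MZComp {k X Y : Type*} [Ring k] [DecidableEq X]
    (ltC : Multiplicative (Multiset X) → Multiplicative (Multiset X) → Prop)
    (f g : MonoidAlgebra k (CW X Y)) (mf mg : CW X Y)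
    (p : MonoidAlgebra k (CW X Y)) (w : CW X Y) : Prop :=
  let e : CW X Y → MonoidAlgebra k (CW X Y) := fun m => mono k m
  let fX := Multiplicative.toAdd mf.1; let gX := Multiplicative.toAdd mg.1
  let L : Multiset X := fX ∪ gX
  let Lf : Multiplicative (Multiset X) := Multiplicative.ofAdd (L - fX)
  let Lg : Multiplicative (Multiset X) := Multiplicative.ofAdd (L - gX)
  -- C₁ : inclusion
  (∃ c d : FreeMonoid Y, mf.2 = c * mg.2 * d ∧
     (mf.2 = mg.2 → (mg.1 = mf.1 ∨ ltC mg.1 mf.1)) ∧ (mg.2 = 1 → c = 1) ∧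
     w = (Multiplicative.ofAdd L, mf.2) ∧
     p = e (Lf, 1) * f - e (Lg, c) * g * e (1, d)) ∨
  -- C₂ : overlap
  (∃ c d c₀ : FreeMonoid Y, c₀ ≠ 1 ∧ mf.2 = c * c₀ ∧ mg.2 = c₀ * d ∧
     w = (Multiplicative.ofAdd L, mf.2 * d) ∧
     p = e (Lf, 1) * f * e (1, d) - e (Lg, c) * g) ∨
  -- C₃ : external
  (∃ c₀ : FreeMonoid Y, fX ∩ gX ≠ 0 ∧ mf.2 ≠ 1 ∧ mg.2 ≠ 1 ∧
     w = (Multiplicative.ofAdd L, mf.2 * c₀ * mg.2) ∧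
     p = e (Lf, 1) * f * e (1, c₀ * mg.2) - e (Lg, mf.2 * c₀) * g)

/-- Gröbner–Shirshov basis in `k[X] ⊗ k⟨Y⟩` in the sense of Mikhalev–Zolotykh. -/
def MZGSB {k X Y : Type*} [Ring k] [DecidableEq X]
    (ltC : Multiplicative (Multiset X) → Multiplicative (Multiset X) → Prop)
    (ltY : FreeMonoid Y → FreeMonoid Y → Prop)
    (S : Set (MonoidAlgebra k (CW X Y))) : Prop :=
  (∀ s ∈ S, MonicR (cwOrd ltC ltY) s) ∧
  ∀ f ∈ S, ∀ g ∈ S, ∀ (mf mg : CW X Y) (p : MonoidAlgebra k (CW X Y)) (w : CW X Y),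
    IsLeadR (cwOrd ltC ltY) f mf → IsLeadR (cwOrd ltC ltY) g mg →
    MZComp ltC f g mf mg p w → TrivModR (cwOrd ltC ltY) S w p

/-- the relations `T = {yx - xy}` in the free algebra `k⟨X ∪ Y⟩`. -/
noncomputable def Tset (k X Y : Type*) [Ring k] :
    Set (MonoidAlgebra k (FreeMonoid (X ⊕ Y))) :=
  {p | ∃ (x : X) (y : Y),
    p = mono k (FreeMonoid.of (Sum.inr y) * FreeMonoid.of (Sum.inl x)) -
        mono k (FreeMonoid.of (Sum.inl x) * FreeMonoid.of (Sum.inr y))}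

/-- the relation identifying each element of `S` with `0`. -/
def relOf {A : Type*} [Ring A] (S : Set A) (a b : A) : Prop := a ∈ S ∧ b = 0


section WordOrder

variable {A : Type*}

theorem List.Lex.append_of_length_eq {r : A → A → Prop} :
    ∀ {u v : List A}, List.Lex r u v → u.length = v.length →
      ∀ t, List.Lex r (u ++ t) (v ++ t)
  | _, _, .nil, hl, _ => by simp at hl
  | _, _, .cons h, hl, t => .cons (append_of_length_eq h (by simpa using hl) t)
  | _, _, .rel h, _, _ => .rel h

theorem degLex_mul_mul {r : A → A → Prop} {u v : FreeMonoid A} (h : degLex r u v)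
    (a b : FreeMonoid A) : degLex r (a * u * b) (a * v * b) := by
  simp only [degLex, FreeMonoid.length_mul, FreeMonoid.toList_mul, List.append_assoc] at h ⊢
  rcases h with h | ⟨hl, h⟩
  · exact Or.inl (by omega)
  · exact Or.inr ⟨by omega, (h.append_of_length_eq hl _).append_left _ _⟩

variable [Preorder A]

theorem degLex_trans {u v w : FreeMonoid A} (h : degLex (· < ·) u v)
    (h' : degLex (· < ·) v w) : degLex (· < ·) u w := by
  rcases h with h | ⟨hl, h⟩ <;> rcases h' with h' | ⟨hl', h'⟩
  · exact Or.inl (h.trans h')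
  · exact Or.inl (hl' ▸ h)
  · exact Or.inl (hl ▸ h')
  · exact Or.inr ⟨hl.trans hl', List.lex_trans lt_trans h h'⟩

theorem degLex_irrefl (u : FreeMonoid A) : ¬ degLex (· < ·) u u := by
  rintro (h | ⟨-, h⟩)
  · exact lt_irrefl _ h
  · exact irrefl_of (List.Lex (· < ·)) _ h

end WordOrder

theorem lexNW_mul_mul {X Y : Type*} {ltX : FreeMonoid X → FreeMonoid X → Prop}
    {ltY : FreeMonoid Y → FreeMonoid Y → Prop}
    (hX : ∀ {u v}, ltX u v → ∀ a b, ltX (a * u * b) (a * v * b))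
    (hY : ∀ {u v}, ltY u v → ∀ a b, ltY (a * u * b) (a * v * b))
    {u v : NW X Y} (h : lexNW ltX ltY u v) (a b : NW X Y) :
    lexNW ltX ltY (a * u * b) (a * v * b) := by
  rcases h with h | ⟨h1, h2⟩
  · exact Or.inl (hX h a.1 b.1)
  · exact Or.inr ⟨by simp [h1], hY h2 a.2 b.2⟩

abbrev ltNW (X Y : Type*) [LinearOrder X] [LinearOrder Y] : NW X Y → NW X Y → Prop :=
  lexNW (degLex ((· < ·) : X → X → Prop)) (degLex ((· < ·) : Y → Y → Prop))

section ltNW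

variable {X Y : Type*} [LinearOrder X] [LinearOrder Y]

theorem ltNW_trans {u v w : NW X Y} (h : ltNW X Y u v) (h' : ltNW X Y v w) : ltNW X Y u w := by
  rcases h with h | ⟨hx, h⟩ <;> rcases h' with h' | ⟨hx', h'⟩
  · exact Or.inl (degLex_trans h h')
  · exact Or.inl (hx' ▸ h)
  · exact Or.inl (hx ▸ h')
  · exact Or.inr ⟨hx.trans hx', degLex_trans h h'⟩

theorem ltNW_irrefl (u : NW X Y) : ¬ ltNW X Y u u := by
  rintro (h | ⟨-, h⟩) <;> exact degLex_irrefl _ h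

instance : Std.Asymm (ltNW X Y) := ⟨fun u _ h h' => ltNW_irrefl u (ltNW_trans h h')⟩

theorem ltNW_mul_mul {u v : NW X Y} (h : ltNW X Y u v) (a b : NW X Y) :
    ltNW X Y (a * u * b) (a * v * b) :=
  lexNW_mul_mul (degLex_mul_mul ·) (degLex_mul_mul ·) h a b

theorem ltNW_of_lex {u v : List X} (y : FreeMonoid Y) (hl : u.length = v.length)
    (h : List.Lex (· < ·) u v) : ltNW X Y (FreeMonoid.ofList u, y) (FreeMonoid.ofList v, y) :=
  Or.inl (Or.inr ⟨hl, h⟩)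

theorem ltNW_swap {i j : X} (hij : j < i) :
    ltNW X Y (FreeMonoid.of j * FreeMonoid.of i, 1) (FreeMonoid.of i * FreeMonoid.of j, 1) :=
  Or.inl (Or.inr ⟨rfl, List.Lex.rel hij⟩)

end ltNW

section LeadingWord

variable {k M : Type*} [Ring k] [Monoid M] {lt : M → M → Prop}

omit [Monoid M] in
theorem IsLeadR.unique [Std.Asymm lt] {f : MonoidAlgebra k M} {m m' : M} (h : IsLeadR lt f m)
    (h' : IsLeadR lt f m') : m = m' := by
  by_contra hne
  exact asymm_of lt (h'.2 m h.1 hne) (h.2 m' h'.1 (Ne.symm hne))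

theorem mono_mul_mono (a b : M) : mono k a * mono k b = mono k (a * b) :=
  (map_mul (MonoidAlgebra.of k M) a b).symm

theorem mono_mul_sub_mul (a b m m' : M) :
    mono k a * (mono k m - mono k m') * mono k b = mono k (a * m * b) - mono k (a * m' * b) := by
  simp only [← mono_mul_mono, mul_sub, sub_mul]

theorem coeff_mono_sub_mono_self {m m' : M} (h : m' ≠ m) :
    (mono k m - mono k m').coeff m = 1 := by
  simp [mono, MonoidAlgebra.coeff_single, h]

theorem coeff_mono_sub_mono_of_ne {m m' u : M} (hm : u ≠ m) (hm' : u ≠ m') :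
    (mono k m - mono k m').coeff u = 0 := by
  simp [mono, MonoidAlgebra.coeff_single, hm.symm, hm'.symm]

variable [Nontrivial k] [Std.Asymm lt]

theorem isLeadR_mono_sub_mono {m m' : M} (h : lt m' m) : IsLeadR lt (mono k m - mono k m') m := by
  have hne : m' ≠ m := by rintro rfl; exact asymm_of lt h h
  refine ⟨Finsupp.mem_support_iff.mpr ?_, fun u hu hum => ?_⟩
  · rw [coeff_mono_sub_mono_self hne]; exact one_ne_zero
  obtain rfl : u = m' := by
    by_contra hum'
    exact Finsupp.mem_support_iff.mp hu (coeff_mono_sub_mono_of_ne hum hum')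
  exact h

theorem monicR_mono_sub_mono {m m' : M} (h : lt m' m) : MonicR lt (mono k m - mono k m') :=
  ⟨m, isLeadR_mono_sub_mono h, coeff_mono_sub_mono_self (by rintro rfl; exact asymm_of lt h h)⟩

end LeadingWord

section TrivialModulo

variable {k M : Type*} [Monoid M] (lt : M → M → Prop)

def trivGens [Semiring k] (S : Set (MonoidAlgebra k M)) (B : Set M) : Set (MonoidAlgebra k M) :=
  {x | ∃ (a b m : M) (s : MonoidAlgebra k M),
    s ∈ S ∧ IsLeadR lt s m ∧ a * m * b ∈ B ∧ mono k a * s * mono k b = x}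

variable {lt}

theorem trivModR_iff_mem_span [Semiring k] {S : Set (MonoidAlgebra k M)} {w : M}
    {h : MonoidAlgebra k M} :
    TrivModR lt S w h ↔ h ∈ Submodule.span k (trivGens lt S {v | lt v w}) := by
  constructor
  · rintro ⟨n, α, a, b, s, hs, rfl, hlead⟩
    refine Submodule.sum_mem _ fun i _ => Submodule.smul_mem _ _ (Submodule.subset_span ?_)
    obtain ⟨m, hm, hlt⟩ := hlead i
    exact ⟨a i, b i, m, s i, hs i, hm, hlt, rfl⟩
  · intro hh
    obtain ⟨n, α, g, rfl⟩ := Submodule.mem_span_set'.mp hh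
    choose a b m s hs hm hlt hg using fun i => (g i).2
    exact ⟨n, α, a, b, s, hs, by simp only [hg], fun i => ⟨m i, hm i, hlt i⟩⟩

theorem trivGens_mono [Semiring k] {S : Set (MonoidAlgebra k M)} {B B' : Set M} (hB : B ⊆ B') :
    trivGens lt S B ⊆ trivGens lt S B' := by
  rintro _ ⟨a, b, m, s, hs, hm, hB'', rfl⟩
  exact ⟨a, b, m, s, hs, hm, hB hB'', rfl⟩

theorem mono_mul_mem_span_trivGens [CommRing k] {S : Set (MonoidAlgebra k M)} {B B' : Set M}
    {c : M} (hB : ∀ v ∈ B, c * v ∈ B') {x : MonoidAlgebra k M}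
    (hx : x ∈ Submodule.span k (trivGens lt S B)) :
    mono k c * x ∈ Submodule.span k (trivGens lt S B') := by
  induction hx using Submodule.span_induction with
  | mem x hx =>
    obtain ⟨a, b, m, s, hs, hm, hmB, rfl⟩ := hx
    refine Submodule.subset_span ⟨c * a, b, m, s, hs, hm, ?_, ?_⟩
    · simpa only [mul_assoc] using hB _ hmB
    · simp only [← mono_mul_mono, mul_assoc]
  | zero => simp
  | add x y _ _ hx hy => rw [mul_add]; exact add_mem hx hy
  | smul r x _ hx => rw [mul_smul_comm]; exact Submodule.smul_mem _ r hx

end TrivialModulo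

theorem List.Pairwise.eq_or_lex_of_perm {X : Type*} [LinearOrder X] :
    ∀ {l l' : List X}, l'.Pairwise (· ≤ ·) → l'.Perm l →
      l' = l ∨ List.Lex (· < ·) l' l
  | [], _, _, hp => Or.inl hp.eq_nil
  | _ :: _, [], _, hp => absurd hp.symm.eq_nil (List.cons_ne_nil _ _)
  | a :: t, b :: t', hs, hp => by
    have hba : b ≤ a := by
      rcases List.mem_cons.1 (hp.mem_iff.2 List.mem_cons_self) with rfl | hmem
      · exact le_rfl
      · exact List.rel_of_pairwise_cons hs hmem
    rcases hba.lt_or_eq with h | rfl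
    · exact Or.inr (List.Lex.rel h)
    · exact (eq_or_lex_of_perm hs.of_cons hp.cons_inv).imp (congrArg _) List.Lex.cons

abbrev commSetNW (k X Y : Type*) [Ring k] [LinearOrder X] : Set (MonoidAlgebra k (NW X Y)) :=
  {p : MonoidAlgebra k (NW X Y) | ∃ i j : X, j < i ∧
    p = mono k ((FreeMonoid.of i * FreeMonoid.of j, 1) : NW X Y) -
      mono k ((FreeMonoid.of j * FreeMonoid.of i, 1) : NW X Y)}

section Sorting

variable (k : Type*) {X Y : Type*} [CommRing k] [LinearOrder X] [LinearOrder Y]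

noncomputable def belowSpan (v : NW X Y) : Submodule k (MonoidAlgebra k (NW X Y)) :=
  Submodule.span k (trivGens (ltNW X Y) (commSetNW k X Y) {u | ltNW X Y u v ∨ u = v})

variable {k}

theorem setOf_ltNW_or_eq_subset {v w : NW X Y} (h : ltNW X Y v w) :
    {u | ltNW X Y u v ∨ u = v} ⊆ {u | ltNW X Y u w} :=
  fun _ hu => hu.elim (ltNW_trans · h) (· ▸ h)

theorem belowSpan_mono {v w : NW X Y} (h : ltNW X Y v w) : belowSpan k v ≤ belowSpan k w :=
  Submodule.span_mono (trivGens_mono fun _ hu => Or.inl (setOf_ltNW_or_eq_subset h hu))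

theorem mono_mul_mem_belowSpan (c : NW X Y) {v : NW X Y} {x : MonoidAlgebra k (NW X Y)}
    (hx : x ∈ belowSpan k v) : mono k c * x ∈ belowSpan k (c * v) :=
  mono_mul_mem_span_trivGens
    (fun _ hu => hu.imp (by simpa using ltNW_mul_mul · c 1) (congrArg (c * ·))) hx

theorem cons_sub_mem_belowSpan (z : X) {a b v : List X} {y : FreeMonoid Y}
    (h : mono k (FreeMonoid.ofList a, y) - mono k (FreeMonoid.ofList b, y) ∈
      belowSpan k (FreeMonoid.ofList v, y)) :
    mono k (FreeMonoid.ofList (z :: a), y) - mono k (FreeMonoid.ofList (z :: b), y) ∈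
      belowSpan k (FreeMonoid.ofList (z :: v), y) := by
  have hcons : ∀ l : List X, ((FreeMonoid.of z, 1) : NW X Y) * (FreeMonoid.ofList l, y) =
      (FreeMonoid.ofList (z :: l), y) := fun l => by simp [FreeMonoid.ofList_cons]
  simpa only [mul_sub, mono_mul_mono, hcons] using mono_mul_mem_belowSpan (FreeMonoid.of z, 1) h

variable [Nontrivial k]

theorem swap_sub_mem_belowSpan {i j : X} (hij : j < i) (l : List X) (y : FreeMonoid Y) :
    mono k (FreeMonoid.ofList (i :: j :: l), y) - mono k (FreeMonoid.ofList (j :: i :: l), y) ∈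
      belowSpan k (FreeMonoid.ofList (i :: j :: l), y) := by
  refine Submodule.subset_span ⟨1, (FreeMonoid.ofList l, y), _, _, ⟨i, j, hij, rfl⟩,
    isLeadR_mono_sub_mono (ltNW_swap hij), Or.inr ?_, ?_⟩
  · simp [FreeMonoid.ofList_cons, mul_assoc]
  · rw [mono_mul_sub_mul]
    simp [FreeMonoid.ofList_cons, mul_assoc]

theorem sub_orderedInsert_mem_belowSpan (y : FreeMonoid Y) (x : X) {m : List X}
    (hm : m.Pairwise (· ≤ ·)) :
    mono k (FreeMonoid.ofList (x :: m), y) -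
        mono k (FreeMonoid.ofList (m.orderedInsert (· ≤ ·) x), y) ∈
      belowSpan k (FreeMonoid.ofList (x :: m), y) := by
  induction m with
  | nil => simp
  | cons z m ih =>
    rw [List.orderedInsert_cons]
    split_ifs with hxz
    · simp
    have hzx : z < x := lt_of_not_ge hxz
    have htail := cons_sub_mem_belowSpan z (ih hm.of_cons)
    have hlt : ltNW X Y (FreeMonoid.ofList (z :: x :: m), y) (FreeMonoid.ofList (x :: z :: m), y) :=
      ltNW_of_lex y rfl (List.Lex.rel hzx)
    rw [← sub_add_sub_cancel _ (mono k (FreeMonoid.ofList (z :: x :: m), y))]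
    exact add_mem (swap_sub_mem_belowSpan hzx m y) (belowSpan_mono hlt htail)

theorem sub_insertionSort_mem_belowSpan (y : FreeMonoid Y) (u : List X) :
    mono k (FreeMonoid.ofList u, y) -
        mono k (FreeMonoid.ofList (u.insertionSort (· ≤ ·)), y) ∈
      belowSpan k (FreeMonoid.ofList u, y) := by
  induction u with
  | nil => simp
  | cons x t ih =>
    rw [List.insertionSort_cons,
      ← sub_add_sub_cancel _ (mono k (FreeMonoid.ofList (x :: t.insertionSort (· ≤ ·)), y))]
    have hsorted := List.pairwise_insertionSort (· ≤ ·) t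
    refine add_mem (cons_sub_mem_belowSpan x ih) ?_
    have hins := sub_orderedInsert_mem_belowSpan (k := k) y x hsorted
    rcases hsorted.eq_or_lex_of_perm (List.perm_insertionSort _ t) with h | h
    · rwa [h] at hins ⊢
    · exact belowSpan_mono (ltNW_of_lex y (by simp [(List.perm_insertionSort _ t).length_eq])
        (List.Lex.cons h)) hins

theorem trivModR_sub_of_perm {u v w : NW X Y} (hperm : u.1.toList.Perm v.1.toList)
    (hy : u.2 = v.2) (hu : ltNW X Y u w) (hv : ltNW X Y v w) :
    TrivModR (ltNW X Y) (commSetNW k X Y) w (mono k u - mono k v) := by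
  obtain ⟨u, y⟩ := u
  obtain ⟨v, y'⟩ := v
  obtain rfl : y = y' := hy
  have hsort : u.toList.insertionSort (· ≤ ·) = v.toList.insertionSort (· ≤ ·) :=
    List.Perm.eq_of_pairwise' (List.pairwise_insertionSort _ _) (List.pairwise_insertionSort _ _)
      ((List.perm_insertionSort _ _).trans (hperm.trans (List.perm_insertionSort _ _).symm))
  have hbelow : ∀ {u : FreeMonoid X}, ltNW X Y (u, y) w →
      mono k (u, y) - mono k (FreeMonoid.ofList (u.toList.insertionSort (· ≤ ·)), y) ∈
        Submodule.span k (trivGens (ltNW X Y) (commSetNW k X Y) {u | ltNW X Y u w}) :=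
    fun {u} hu => by
      have h := sub_insertionSort_mem_belowSpan (k := k) y u.toList
      rw [FreeMonoid.ofList_toList] at h
      exact Submodule.span_mono (trivGens_mono (setOf_ltNW_or_eq_subset hu)) h
  rw [trivModR_iff_mem_span, ← sub_sub_sub_cancel_right _ _
    (mono k (FreeMonoid.ofList (u.toList.insertionSort (· ≤ ·)), y))]
  exact sub_mem (hbelow hu) (hsort ▸ hbelow hv)

end Sorting

theorem IsComp.exists_eq_sub {k X Y : Type*} [Ring k] {f g : MonoidAlgebra k (NW X Y)}
    {mf mg w : NW X Y} {p : MonoidAlgebra k (NW X Y)} (h : IsComp f g mf mg p w) :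
    ∃ α β γ δ : NW X Y, α * mf * β = w ∧ γ * mg * δ = w ∧
      p = mono k α * f * mono k β - mono k γ * g * mono k δ := by
  have hone : mono k (1 : NW X Y) = 1 := map_one _
  obtain ⟨fx, fy⟩ := mf
  obtain ⟨gx, gy⟩ := mg
  simp only [IsComp] at h
  rcases h with ⟨a, b, c, rfl, ⟨rfl, rfl⟩ | ⟨rfl, rfl⟩⟩ |
    ⟨a, c, d, rfl, ⟨rfl, rfl⟩ | ⟨rfl, rfl⟩⟩ |
    ⟨a, b, c, d, rfl, rfl, rfl, rfl⟩ | ⟨a, b, c, d, rfl, rfl, rfl, rfl⟩ |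
    ⟨a, b, c, hx, -, ⟨rfl, rfl⟩ | ⟨rfl, rfl⟩⟩ |
    ⟨a, c, d, hy, -, ⟨rfl, rfl⟩ | ⟨rfl, rfl⟩⟩ |
    ⟨a, b, c, d, hx, hy, -, -, rfl, rfl⟩ | ⟨a, b, c, d, hx, hy, -, -, rfl, rfl⟩ |
    ⟨a, b, c, d, rfl, ⟨hy, -, rfl, rfl⟩ | ⟨hy, -, rfl, rfl⟩⟩ |
    ⟨a, b, c, d, hx, -, ⟨rfl, rfl, rfl⟩ | ⟨rfl, rfl, rfl⟩⟩
  · refine ⟨1, (1, c * gy), (a, fy * c), (b, 1), ?_, ?_, ?_⟩ <;> simp [mul_assoc, *]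
  · refine ⟨(1, gy * c), 1, (a, 1), (b, c * fy), ?_, ?_, ?_⟩ <;> simp [mul_assoc, *]
  · refine ⟨1, (a * gx, 1), (fx * a, c), (1, d), ?_, ?_, ?_⟩ <;> simp [mul_assoc, *]
  · refine ⟨(gx * a, 1), 1, (1, c), (a * fx, d), ?_, ?_, ?_⟩ <;> simp [mul_assoc, *]
  · refine ⟨1, 1, (a, c), (b, d), ?_, ?_, ?_⟩ <;> simp [mul_assoc, *]
  · refine ⟨(1, c), (1, d), (a, 1), (b, 1), ?_, ?_, ?_⟩ <;> simp [mul_assoc, *]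
  · refine ⟨1, (a, c * gy), (b, fy * c), 1, ?_, ?_, ?_⟩ <;> simp [mul_assoc, *]
  · refine ⟨(1, gy * c), (a, 1), (b, 1), (1, c * fy), ?_, ?_, ?_⟩ <;> simp [mul_assoc, *]
  · refine ⟨1, (a * gx, c), (fx * a, d), 1, ?_, ?_, ?_⟩ <;> simp [mul_assoc, *]
  · refine ⟨(gx * a, 1), (1, c), (1, d), (a * fx, 1), ?_, ?_, ?_⟩ <;> simp [mul_assoc, *]
  · refine ⟨1, (a, c), (b, d), 1, ?_, ?_, ?_⟩ <;> simp [*]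
  · refine ⟨(1, c), (a, 1), (b, 1), (1, d), ?_, ?_, ?_⟩ <;> simp [mul_assoc, *]
  · refine ⟨1, (1, c), (a, d), (b, 1), ?_, ?_, ?_⟩ <;> simp [mul_assoc, *]
  · refine ⟨(1, c), 1, (a, 1), (b, d), ?_, ?_, ?_⟩ <;> simp [mul_assoc, *]
  · refine ⟨1, (a, 1), (b, c), (1, d), ?_, ?_, ?_⟩ <;> simp [mul_assoc, *]
  · refine ⟨(1, c), (a, d), (b, 1), 1, ?_, ?_, ?_⟩ <;> simp [mul_assoc, *]

theorem perm_swap_mul_mul {X Y : Type*} (a b : NW X Y) (i j : X) :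
    (a * ((FreeMonoid.of j * FreeMonoid.of i, 1) : NW X Y) * b).1.toList.Perm
      (a * ((FreeMonoid.of i * FreeMonoid.of j, 1) : NW X Y) * b).1.toList := by
  simpa using ((List.Perm.swap i j []).append_right _).append_left _

theorem isGSB_commSetNW {k X Y : Type*} [CommRing k] [Nontrivial k] [LinearOrder X]
    [LinearOrder Y] : IsGSB (ltNW X Y) (commSetNW k X Y) := by
  refine ⟨fun s ⟨i, j, hij, hs⟩ => hs ▸ monicR_mono_sub_mono (ltNW_swap hij), ?_⟩
  rintro _ ⟨i, j, hij, rfl⟩ _ ⟨i', j', hij', rfl⟩ mf mg p w hmf hmg hcomp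
  obtain rfl := hmf.unique (isLeadR_mono_sub_mono (ltNW_swap hij))
  obtain rfl := hmg.unique (isLeadR_mono_sub_mono (ltNW_swap hij'))
  obtain ⟨α, β, γ, δ, rfl, hw, rfl⟩ := hcomp.exists_eq_sub
  rw [mono_mul_sub_mul, mono_mul_sub_mul, hw, sub_sub_sub_cancel_left]
  have hperm : (γ * (FreeMonoid.of j' * FreeMonoid.of i', 1) * δ).1.toList.Perm
      (α * (FreeMonoid.of j * FreeMonoid.of i, 1) * β).1.toList := by
    refine (perm_swap_mul_mul γ δ i' j').trans ?_
    rw [hw]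
    exact (perm_swap_mul_mul α β i j).symm
  have hy : (γ * (FreeMonoid.of j' * FreeMonoid.of i', 1) * δ).2 =
      (α * (FreeMonoid.of j * FreeMonoid.of i, 1) * β).2 := by
    simpa using congrArg Prod.snd hw
  exact trivModR_sub_of_perm hperm hy (hw ▸ ltNW_mul_mul (ltNW_swap hij') γ δ)
    (ltNW_mul_mul (ltNW_swap hij) α β)

theorem RingQuot.mkAlgHom_relOf_eq {R A : Type*} [CommSemiring R] [Ring A] [Algebra R A]
    {S : Set A} {a b : A} (h : a - b ∈ S) :
    RingQuot.mkAlgHom R (relOf S) a = RingQuot.mkAlgHom R (relOf S) b := by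
  rw [← sub_eq_zero, ← map_sub,
    RingQuot.mkAlgHom_rel R (show relOf S (a - b) 0 from ⟨h, rfl⟩), map_zero]

theorem commute_mkAlgHom_mono {k M : Type*} [CommRing k] [Monoid M]
    {S : Set (MonoidAlgebra k M)} {u v : M} (h : mono k (u * v) - mono k (v * u) ∈ S) :
    Commute (RingQuot.mkAlgHom k (relOf S) (mono k u))
      (RingQuot.mkAlgHom k (relOf S) (mono k v)) := by
  simpa only [Commute, SemiconjBy, ← map_mul, mono_mul_mono] using RingQuot.mkAlgHom_relOf_eq h

abbrev commSetSum (k X Y : Type*) [Ring k] [LinearOrder X] :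
    Set (MonoidAlgebra k (FreeMonoid (X ⊕ Y))) :=
  {p : MonoidAlgebra k (FreeMonoid (X ⊕ Y)) | ∃ i j : X, j < i ∧
    p = mono k (FreeMonoid.of (Sum.inl i) * FreeMonoid.of (Sum.inl j)) -
      mono k (FreeMonoid.of (Sum.inl j) * FreeMonoid.of (Sum.inl i))}

abbrev PresAlg (k X Y : Type*) [CommRing k] [LinearOrder X] :=
  RingQuot (relOf (Tset k X Y ∪ commSetSum k X Y))

abbrev TensorAlg (k X Y : Type*) [CommRing k] :=
  TensorProduct k (MvPolynomial X k) (MonoidAlgebra k (FreeMonoid Y))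

namespace PresAlg

variable (k : Type*) {X Y : Type*} [CommRing k] [LinearOrder X]

noncomputable def gen (z : X ⊕ Y) : PresAlg k X Y :=
  RingQuot.mkAlgHom k _ (mono k (FreeMonoid.of z))

theorem commute_gen {z z' : X ⊕ Y} (h : mono k (FreeMonoid.of z * FreeMonoid.of z') -
    mono k (FreeMonoid.of z' * FreeMonoid.of z) ∈ Tset k X Y ∪ commSetSum k X Y) :
    Commute (gen k z) (gen k z') :=
  commute_mkAlgHom_mono h

theorem commute_gen_inl_inr (x : X) (y : Y) :
    Commute (gen k (Sum.inl x : X ⊕ Y)) (gen k (Sum.inr y : X ⊕ Y)) :=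
  (commute_gen k (Or.inl ⟨x, y, rfl⟩)).symm

theorem commute_gen_inl_inl (x x' : X) :
    Commute (gen k (Sum.inl x : X ⊕ Y)) (gen k (Sum.inl x' : X ⊕ Y)) := by
  rcases lt_trichotomy x x' with h | rfl | h
  · exact (commute_gen k (Or.inr ⟨x', x, h, rfl⟩)).symm
  · exact Commute.refl _
  · exact commute_gen k (Or.inr ⟨x, x', h, rfl⟩)

noncomputable def genX : Subalgebra k (PresAlg k X Y) :=
  Algebra.adjoin k (Set.range fun x : X => gen k (Sum.inl x : X ⊕ Y))

instance : IsMulCommutative (genX k (X := X) (Y := Y)) :=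
  Algebra.isMulCommutative_adjoin k (by
    rintro _ ⟨x, rfl⟩ _ ⟨x', rfl⟩
    exact commute_gen_inl_inl k x x')

open scoped IsMulCommutative in
noncomputable def ofPoly : MvPolynomial X k →ₐ[k] PresAlg k X Y :=
  (genX k).val.comp
    (MvPolynomial.aeval fun x => ⟨gen k (Sum.inl x), Algebra.subset_adjoin ⟨x, rfl⟩⟩)

noncomputable def ofWords : MonoidAlgebra k (FreeMonoid Y) →ₐ[k] PresAlg k X Y :=
  MonoidAlgebra.lift k _ _ (FreeMonoid.lift fun y => gen k (Sum.inr y))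

theorem commute_gen_inl_ofWords (x : X) (q : MonoidAlgebra k (FreeMonoid Y)) :
    Commute (gen k (Sum.inl x)) (ofWords k q) := by
  induction q using MonoidAlgebra.induction_on with
  | of m =>
    rw [ofWords, MonoidAlgebra.lift_of, FreeMonoid.lift_apply]
    exact Commute.list_prod_right _ _ fun _ hb => by
      obtain ⟨y, -, rfl⟩ := List.mem_map.mp hb
      exact commute_gen_inl_inr k x y
  | add p q hp hq => rw [map_add]; exact hp.add_right hq
  | smul r p hp => rw [map_smul]; exact hp.smul_right r

theorem commute_ofPoly_ofWords (p : MvPolynomial X k) (q : MonoidAlgebra k (FreeMonoid Y)) :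
    Commute (ofPoly k p) (ofWords k q) :=
  (Algebra.commute_of_mem_adjoin_of_forall_mem_commute (SetLike.coe_mem _) (by
    rintro _ ⟨x, rfl⟩
    exact (commute_gen_inl_ofWords k x q).symm)).symm

noncomputable def ofTensor : TensorAlg k X Y →ₐ[k] PresAlg k X Y :=
  Algebra.TensorProduct.lift (ofPoly k) (ofWords k) (commute_ofPoly_ofWords k)

theorem ofTensor_X_tmul_one (x : X) :
    ofTensor k (MvPolynomial.X x ⊗ₜ[k] (1 : MonoidAlgebra k (FreeMonoid Y))) =
      gen k (Sum.inl x) := by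
  simp [ofTensor, ofPoly]

theorem ofTensor_one_tmul_mono (y : Y) :
    ofTensor k ((1 : MvPolynomial X k) ⊗ₜ[k] mono k (FreeMonoid.of y)) = gen k (Sum.inr y) := by
  simp [ofTensor, ofWords, mono]

noncomputable def freeToTensor : MonoidAlgebra k (FreeMonoid (X ⊕ Y)) →ₐ[k] TensorAlg k X Y :=
  MonoidAlgebra.lift k _ _ (FreeMonoid.lift (Sum.elim
    (fun x => MvPolynomial.X x ⊗ₜ[k] 1) (fun y => 1 ⊗ₜ[k] mono k (FreeMonoid.of y))))

theorem freeToTensor_eq_zero {p : MonoidAlgebra k (FreeMonoid (X ⊕ Y))}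
    (hp : p ∈ Tset k X Y ∪ commSetSum k X Y) : freeToTensor k p = 0 := by
  rcases hp with ⟨x, y, rfl⟩ | ⟨i, j, -, rfl⟩
  · simp [freeToTensor, mono]
  · simp [freeToTensor, mono, mul_comm]

noncomputable def toTensor : PresAlg k X Y →ₐ[k] TensorAlg k X Y :=
  RingQuot.liftAlgHom k ⟨freeToTensor k, fun _ _ ⟨ha, hb⟩ => by
    rw [hb, map_zero, freeToTensor_eq_zero k ha]⟩

theorem toTensor_gen_inl (x : X) :
    toTensor k (gen k (Sum.inl x : X ⊕ Y)) = MvPolynomial.X x ⊗ₜ[k] 1 := by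
  simp [toTensor, gen, freeToTensor, mono]

theorem toTensor_gen_inr (y : Y) :
    toTensor k (gen k (Sum.inr y : X ⊕ Y)) = 1 ⊗ₜ[k] mono k (FreeMonoid.of y) := by
  simp [toTensor, gen, freeToTensor, mono]

theorem toTensor_comp_ofTensor :
    (toTensor k (X := X) (Y := Y)).comp (ofTensor k) = AlgHom.id k (TensorAlg k X Y) := by
  refine Algebra.TensorProduct.ext (MvPolynomial.algHom_ext fun x => ?_)
    (MonoidAlgebra.algHom_ext' (FreeMonoid.hom_eq fun y => ?_) (Subsingleton.elim _ _))
  · change toTensor k (ofTensor k (MvPolynomial.X x ⊗ₜ 1)) = MvPolynomial.X x ⊗ₜ 1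
    rw [ofTensor_X_tmul_one, toTensor_gen_inl]
  · change toTensor k (ofTensor k (1 ⊗ₜ mono k (FreeMonoid.of y))) =
      1 ⊗ₜ mono k (FreeMonoid.of y)
    rw [ofTensor_one_tmul_mono, toTensor_gen_inr]

theorem ofTensor_comp_toTensor :
    (ofTensor k (X := X) (Y := Y)).comp (toTensor k) = AlgHom.id k (PresAlg k X Y) := by
  refine RingQuot.ringQuot_ext' _ _ _
    (MonoidAlgebra.algHom_ext' (FreeMonoid.hom_eq fun z => ?_) (Subsingleton.elim _ _))
  rcases z with x | y
  · change ofTensor k (toTensor k (gen k (Sum.inl x))) = gen k (Sum.inl x)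
    rw [toTensor_gen_inl, ofTensor_X_tmul_one]
  · change ofTensor k (toTensor k (gen k (Sum.inr y))) = gen k (Sum.inr y)
    rw [toTensor_gen_inr, ofTensor_one_tmul_mono]

noncomputable def tensorEquiv : TensorAlg k X Y ≃ₐ[k] PresAlg k X Y :=
  AlgEquiv.ofAlgHom (ofTensor k) (toTensor k) (ofTensor_comp_toTensor k)
    (toTensor_comp_ofTensor k)

end PresAlg

/-- `S = {xᵢxⱼ - xⱼxᵢ : xᵢ > xⱼ}` is a Gröbner–Shirshov basis in
`k⟨X⟩ ⊗ k⟨Y⟩` for the deg-lex order on `X*Y*`, and consequently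
`k[X] ⊗ k⟨Y⟩ ≅ k⟨X ∪ Y | T ∪ S⟩`. -/
theorem stmt_10 (k X Y : Type*) [Field k] [LinearOrder X] [LinearOrder Y] :
    IsGSB (lexNW (degLex ((· < ·) : X → X → Prop)) (degLex ((· < ·) : Y → Y → Prop)))
      {p : MonoidAlgebra k (NW X Y) | ∃ i j : X, j < i ∧
        p = mono k ((FreeMonoid.of i * FreeMonoid.of j, 1) : NW X Y) -
            mono k ((FreeMonoid.of j * FreeMonoid.of i, 1) : NW X Y)} ∧
    Nonempty
      ((TensorProduct k (MvPolynomial X k) (MonoidAlgebra k (FreeMonoid Y))) ≃ₐ[k]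
        RingQuot (relOf (Tset k X Y ∪
          {p : MonoidAlgebra k (FreeMonoid (X ⊕ Y)) | ∃ i j : X, j < i ∧
            p = mono k (FreeMonoid.of (Sum.inl i) * FreeMonoid.of (Sum.inl j)) -
                mono k (FreeMonoid.of (Sum.inl j) * FreeMonoid.of (Sum.inl i))}))) :=
  ⟨isGSB_commSetNW, ⟨PresAlg.tensorEquiv k (X := X) (Y := Y)⟩⟩
end

section
/- The order on X*Y* defined by u > v ⟺ γ(u^X)u^Y > γ(v^X)v^Y in [X]Y*, or (γ(u^X)u^Y = γ(v^X)v^Y and u^X >_lex v^X), is a monomial order on X*Y*, where the order on [X]Y* is: u > v iff u^Y > v^Y, or (u^Y = v^Y and u^X > v^X), for fixed monomial orders on [X] and Y*. -/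
/-!
`liftNW` is the pullback of the lexicographic product `(Y*, [X], X*)` along the
injective key `u ↦ ((u^Y, γ(u^X)), u^X)`, so it is a strict total order. The lexicographic
order on `X*` is not well founded, but it is only consulted inside a fibre of `γ`, and such a
fibre is finite (the rearrangements of one word). Compatibility with multiplication holds because `γ` is a monoid
homomorphism and, between words of equal length, `lex` survives appending on either side.
-/

open Function

theorem List.Lex.append_of_length_eq_s15 {α : Type*} {r : α → α → Prop} {s t : List α}
    (h : List.Lex r s t) (hlen : s.length = t.length) (q : List α) :
    List.Lex r (s ++ q) (t ++ q) := by
  induction h with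
  | nil => simp at hlen
  | cons _ ih => exact .cons (ih (by simpa using hlen))
  | rel h => exact .rel h

theorem Multiset.finite_setOf_coe_eq {α : Type*} (m : Multiset α) :
    {l : List α | (l : Multiset α) = m}.Finite := by
  induction m using Quotient.inductionOn with
  | h l₀ =>
    exact l₀.permutations.finite_toSet.subset fun l hl =>
      List.mem_permutations.2 (Multiset.coe_eq_coe.1 hl)

instance Prod.Lex.isStrictTotalOrder {α β : Type*} {r : α → α → Prop} {s : β → β → Prop}
    [IsStrictTotalOrder α r] [IsStrictTotalOrder β s] :
    IsStrictTotalOrder (α × β) (Prod.Lex r s) where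

instance List.Lex.isStrictTotalOrder {α : Type*} {r : α → α → Prop} [IsStrictTotalOrder α r] :
    IsStrictTotalOrder (List α) (List.Lex r) :=
  { isStrictWeakOrder_of_isOrderConnected with }

section LiftNW

variable {X Y : Type*}

theorem gam_mul (u v : FreeMonoid X) : gam (u * v) = gam u * gam v := by
  simp only [gam, FreeMonoid.toList_mul, ← Multiset.coe_add, ofAdd_add]

theorem cwOrd_mul_mul
    {ltC : Multiplicative (Multiset X) → Multiplicative (Multiset X) → Prop}
    {ltY : FreeMonoid Y → FreeMonoid Y → Prop}
    (hC : ∀ u v w₁ w₂, ltC u v → ltC (w₁ * u * w₂) (w₁ * v * w₂))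
    (hY : ∀ u v w₁ w₂, ltY u v → ltY (w₁ * u * w₂) (w₁ * v * w₂))
    {u v : CW X Y} (w₁ w₂ : CW X Y) (h : cwOrd ltC ltY u v) :
    cwOrd ltC ltY (w₁ * u * w₂) (w₁ * v * w₂) := by
  rcases h with hy | ⟨hy, hc⟩
  · exact .inl (hY _ _ _ _ hy)
  · exact .inr ⟨congrArg (w₁.2 * · * w₂.2) hy, hC _ _ _ _ hc⟩

def liftNWKey (u : NW X Y) : (FreeMonoid Y × Multiplicative (Multiset X)) × List X :=
  ((u.2, gam u.1), u.1.toList)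

theorem liftNWKey_injective : Injective (liftNWKey (X := X) (Y := Y)) := by
  rintro ⟨u₁, u₂⟩ ⟨v₁, v₂⟩ h
  simp only [liftNWKey, Prod.mk.injEq] at h
  exact Prod.ext (FreeMonoid.toList.injective h.2) h.1.1

variable [LinearOrder X]
  (ltC : Multiplicative (Multiset X) → Multiplicative (Multiset X) → Prop)
  (ltY : FreeMonoid Y → FreeMonoid Y → Prop)

theorem liftNW_eq_onFun :
    liftNW ltC ltY = (Prod.Lex (Prod.Lex ltY ltC) (List.Lex (· < ·)) on liftNWKey) := by
  ext u v
  simp only [liftNW, cwOrd, onFun, liftNWKey, Prod.lex_def, Prod.mk.injEq, and_comm]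

theorem liftNW_isStrictTotalOrder [IsStrictTotalOrder _ ltC] [IsStrictTotalOrder _ ltY] :
    IsStrictTotalOrder (NW X Y) (liftNW ltC ltY) := by
  rw [liftNW_eq_onFun]
  exact liftNWKey_injective.isStrictTotalOrder_onFun
    (r := Prod.Lex (Prod.Lex ltY ltC) (List.Lex (· < ·)))

theorem liftNW_wellFounded (hC : WellFounded ltC) (hY : WellFounded ltY) :
    WellFounded (liftNW ltC ltY) := by
  rw [liftNW_eq_onFun]
  refine (hY.prod_lex hC).onFun.prod_lex_of_wellFoundedOn_fiber fun a => ?_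
  refine Set.wellFoundedOn_image.1 (Set.Finite.wellFoundedOn ?_)
  refine (Multiset.finite_setOf_coe_eq (Multiplicative.toAdd a.2)).subset ?_
  rintro _ ⟨u, hu, rfl⟩
  exact congrArg (fun p => Multiplicative.toAdd p.2) hu

theorem liftNW_mul_mul
    (hC : ∀ u v w₁ w₂, ltC u v → ltC (w₁ * u * w₂) (w₁ * v * w₂))
    (hY : ∀ u v w₁ w₂, ltY u v → ltY (w₁ * u * w₂) (w₁ * v * w₂))
    {u v : NW X Y} (w₁ w₂ : NW X Y) (h : liftNW ltC ltY u v) :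
    liftNW ltC ltY (w₁ * u * w₂) (w₁ * v * w₂) := by
  rcases h with h | ⟨⟨hγ, hy⟩, hlex⟩
  · left
    simpa only [Prod.mk_mul_mk, Prod.fst_mul, Prod.snd_mul, gam_mul] using
      cwOrd_mul_mul hC hY (gam w₁.1, w₁.2) (gam w₂.1, w₂.2) h
  · refine .inr ⟨⟨?_, ?_⟩, ?_⟩
    · simp only [Prod.fst_mul, gam_mul, hγ]
    · simp only [Prod.snd_mul, hy]
    · have hlen : u.1.toList.length = v.1.toList.length :=
        (Multiset.coe_eq_coe.1 (Multiplicative.ofAdd.injective hγ)).length_eq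
      simpa only [Prod.fst_mul, FreeMonoid.toList_mul, List.append_assoc] using
        (hlex.append_of_length_eq_s15 hlen w₂.1.toList).append_left _ w₁.1.toList

end LiftNW

theorem stmt_15_general {X Y : Type*} [LinearOrder X]
    (ltC : Multiplicative (Multiset X) → Multiplicative (Multiset X) → Prop)
    (ltY : FreeMonoid Y → FreeMonoid Y → Prop)
    (hC : MonOrd ltC) (hY : MonOrd ltY) :
    MonOrd (liftNW ltC ltY) :=
  have := hC.1
  have := hY.1
  ⟨liftNW_isStrictTotalOrder ltC ltY, liftNW_wellFounded ltC ltY hC.2.1 hY.2.1,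
    fun _ _ w₁ w₂ => liftNW_mul_mul ltC ltY hC.2.2 hY.2.2 w₁ w₂⟩

/-- the order on `X*Y*` defined by
`u > v ⟺ γ(u^X)u^Y > γ(v^X)v^Y in [X]Y*, or (γ(u^X)u^Y = γ(v^X)v^Y and u^X >_lex v^X)`
is a monomial order on `X*Y*`, where the order on `[X]Y*` compares the `Y`-part first and
then the `[X]`-part, for fixed monomial orders on `[X]` and `Y*`. -/
theorem stmt_15 {X Y : Type*} [LinearOrder X]
    (hwf : WellFounded ((· < ·) : X → X → Prop))
    (ltC : Multiplicative (Multiset X) → Multiplicative (Multiset X) → Prop)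
    (ltY : FreeMonoid Y → FreeMonoid Y → Prop)
    (hC : MonOrd ltC) (hY : MonOrd ltY) :
    MonOrd (liftNW ltC ltY) :=
  stmt_15_general ltC ltY hC hY
end
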